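/- In the Gaussian model setup with μ ≠ 0, if ε > ‖μ‖_∞, then the sequence (g_n) is strictly increasing for all n ≥ 1. -/

import Mathlib

open Real MeasureTheory ProbabilityTheory Filter Topology

/-- Generalization gap `g_n = W · E[⟨sign(u) − sign(u − ε·sign(u)), μ⟩]` in the Gaussian
model, where `u` has independent coordinates `u(j) ~ N(μ(j), σ(j)²/n)`. -/
noncomputable def gaussGap (d : ℕ) (W ε : ℝ) (μ σ : Fin d → ℝ) (n : ℕ) : ℝ :=
  W * ∫ u : Fin d → ℝ,
      (∑ j, (Real.sign (u j) - Real.sign (u j - ε * Real.sign (u j))) * μ j)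
    ∂(Measure.pi fun j => gaussianReal (μ j) (Real.toNNReal ((σ j) ^ 2 / n)))

/-!
Coordinatewise, `sign x − sign (x − ε sign x)` is `2` on `(0, ε)`, `−2` on `(−ε, 0)` and `0` off
`[−ε, ε]`. Writing `φ` for the standard normal density and `Λ y = ∫₀^y φ`, a coordinate
`x ~ N(m, 1/t²)` therefore contributes `2W · m · J_m(t)` to the gap, where
`J_m(t) = Λ((ε−m)t) + 2Λ(mt) − Λ((ε+m)t)` and the precision `t = √n / σ` grows with `n`. The
derivative `J_m'(t) = (ε−m)(φ((ε−m)t) − φ((ε+m)t)) + 2m(φ(mt) − φ((ε+m)t))` is positive for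
`t > 0` when `0 < m < ε`, because `φ` is strictly decreasing on `[0, ∞)`.
-/

open Set
open scoped NNReal

lemma continuous_gaussianPDFReal (m : ℝ) (v : ℝ≥0) : Continuous (gaussianPDFReal m v) := by
  unfold gaussianPDFReal
  fun_prop

lemma gaussianPDFReal_strictAntiOn_Ici (m : ℝ) {v : ℝ≥0} (hv : v ≠ 0) :
    StrictAntiOn (gaussianPDFReal m v) (Ici m) := by
  intro x hx y _ hxy
  have hsq : (x - m) ^ 2 < (y - m) ^ 2 := by nlinarith [mem_Ici.mp hx]
  simp only [gaussianPDFReal_def]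
  gcongr

lemma gaussianPDFReal_zero_one_neg (x : ℝ) :
    gaussianPDFReal 0 1 (-x) = gaussianPDFReal 0 1 x := by
  simp [gaussianPDFReal_def]

lemma gaussianPDFReal_eq_inv_sqrt_mul (m : ℝ) {v : ℝ≥0} (hv : v ≠ 0) (x : ℝ) :
    gaussianPDFReal m v x = (√v)⁻¹ * gaussianPDFReal 0 1 ((x - m) / √v) := by
  have hv' : (0 : ℝ) < v := by positivity
  simp only [gaussianPDFReal_def, NNReal.coe_one, mul_one, sub_zero, div_pow, sq_sqrt hv'.le]
  rw [sqrt_mul (by positivity), mul_inv]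
  field_simp

/-- `Λ y = Φ y − 1/2`, with `Φ` the standard normal cdf. -/
noncomputable def stdNormalArea (y : ℝ) : ℝ := ∫ x in (0 : ℝ)..y, gaussianPDFReal 0 1 x

lemma hasDerivAt_stdNormalArea (y : ℝ) :
    HasDerivAt stdNormalArea (gaussianPDFReal 0 1 y) y :=
  ((continuous_gaussianPDFReal 0 1).integral_hasStrictDerivAt 0 y).hasDerivAt

lemma stdNormalArea_neg (y : ℝ) : stdNormalArea (-y) = -stdNormalArea y := by
  have h := intervalIntegral.integral_comp_neg (a := 0) (b := y) (gaussianPDFReal 0 1)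
  simp only [gaussianPDFReal_zero_one_neg, neg_zero] at h
  rw [stdNormalArea, stdNormalArea, intervalIntegral.integral_symm, h]

lemma intervalIntegral_gaussianPDFReal (m : ℝ) {v : ℝ≥0} (hv : v ≠ 0) (a b : ℝ) :
    ∫ x in a..b, gaussianPDFReal m v x
      = stdNormalArea ((b - m) / √v) - stdNormalArea ((a - m) / √v) := by
  have hs : √(v : ℝ) ≠ 0 := (sqrt_pos.mpr (by positivity)).ne'
  have hcont := continuous_gaussianPDFReal 0 1
  simp_rw [gaussianPDFReal_eq_inv_sqrt_mul m hv, intervalIntegral.integral_const_mul]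
  rw [intervalIntegral.integral_comp_sub_right (fun y => gaussianPDFReal 0 1 (y / √v)),
    intervalIntegral.integral_comp_div _ hs, smul_eq_mul, inv_mul_cancel_left₀ hs,
    ← intervalIntegral.integral_interval_sub_left (hcont.intervalIntegrable _ _)
      (hcont.intervalIntegrable _ _), stdNormalArea, stdNormalArea]

lemma gaussianReal_real_Ioo (m : ℝ) {v : ℝ≥0} (hv : v ≠ 0) {a b : ℝ} (hab : a ≤ b) :
    (gaussianReal m v).real (Ioo a b)
      = stdNormalArea ((b - m) / √v) - stdNormalArea ((a - m) / √v) := by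
  rw [measureReal_def, gaussianReal_apply_eq_integral m hv, ENNReal.toReal_ofReal
    (setIntegral_nonneg measurableSet_Ioo fun x _ => gaussianPDFReal_nonneg m v x),
    ← integral_Ioc_eq_integral_Ioo, ← intervalIntegral.integral_of_le hab,
    intervalIntegral_gaussianPDFReal m hv]

noncomputable def signFlip (ε x : ℝ) : ℝ := Real.sign x - Real.sign (x - ε * Real.sign x)

lemma Real.measurable_sign : Measurable Real.sign :=
  Measurable.ite measurableSet_Iio measurable_const
    (Measurable.ite measurableSet_Ioi measurable_const measurable_const)

lemma measurable_signFlip (ε : ℝ) : Measurable (signFlip ε) :=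
  measurable_sign.sub (measurable_sign.comp (measurable_id.sub (measurable_sign.const_mul ε)))

lemma abs_signFlip_le (ε x : ℝ) : |signFlip ε x| ≤ 2 := by
  have h (y : ℝ) : |Real.sign y| ≤ 1 := by
    rcases Real.sign_apply_eq y with h | h | h <;> norm_num [h]
  exact (abs_sub _ _).trans (by linarith [h x, h (x - ε * Real.sign x)])

lemma signFlip_eq_indicator {ε x : ℝ} (hxε : x ≠ ε) (hxε' : x ≠ -ε) :
    signFlip ε x
      = (Ioo 0 ε).indicator (fun _ => 2) x - (Ioo (-ε) 0).indicator (fun _ => 2) x := by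
  unfold signFlip
  rcases lt_trichotomy x 0 with hx | rfl | hx
  · rw [Real.sign_of_neg hx, indicator_of_notMem fun h => h.1.not_gt hx]
    rcases hxε'.lt_or_gt with h | h
    · rw [Real.sign_of_neg (by linarith), indicator_of_notMem fun h' => h'.1.not_gt h]
      norm_num
    · rw [Real.sign_of_pos (by linarith), indicator_of_mem (show x ∈ Ioo (-ε) 0 from ⟨h, hx⟩)]
      norm_num
  · simp
  · rw [Real.sign_of_pos hx, indicator_of_notMem (s := Ioo (-ε) 0) fun h => h.2.not_gt hx]
    rcases hxε.lt_or_gt with h | h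
    · rw [Real.sign_of_neg (by linarith), indicator_of_mem (show x ∈ Ioo 0 ε from ⟨hx, h⟩)]
      norm_num
    · rw [Real.sign_of_pos (by linarith), indicator_of_notMem fun h' => h'.2.not_gt h]
      norm_num

lemma integral_signFlip (ε : ℝ) (ν : Measure ℝ) [IsFiniteMeasure ν] [NullSingletonClass ν] :
    ∫ x, signFlip ε x ∂ν = 2 * (ν.real (Ioo 0 ε) - ν.real (Ioo (-ε) 0)) := by
  have hae : signFlip ε =ᵐ[ν]
      fun x => (Ioo 0 ε).indicator (fun _ => 2) x - (Ioo (-ε) 0).indicator (fun _ => 2) x := by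
    filter_upwards [measure_eq_zero_iff_ae_notMem.mp (measure_singleton (μ := ν) ε),
      measure_eq_zero_iff_ae_notMem.mp (measure_singleton (μ := ν) (-ε))] with x h h'
    exact signFlip_eq_indicator h h'
  have hint (s : Set ℝ) (hs : MeasurableSet s) : Integrable (s.indicator fun _ => (2 : ℝ)) ν :=
    (integrable_const 2).indicator hs
  rw [integral_congr_ae hae, integral_sub (hint _ measurableSet_Ioo) (hint _ measurableSet_Ioo),
    integral_indicator_const 2 measurableSet_Ioo, integral_indicator_const 2 measurableSet_Ioo]
  simp only [smul_eq_mul]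
  ring

/-- `J_m(t)`, half the mean of `signFlip ε` under `N(m, 1/t²)`. -/
noncomputable def signFlipProfile (ε m t : ℝ) : ℝ :=
  stdNormalArea ((ε - m) * t) + 2 * stdNormalArea (m * t) - stdNormalArea ((ε + m) * t)

lemma integral_signFlip_gaussianReal {ε : ℝ} (hε : 0 ≤ ε) (m : ℝ) {v : ℝ≥0} (hv : v ≠ 0) :
    ∫ x, signFlip ε x ∂gaussianReal m v = 2 * signFlipProfile ε m (√v)⁻¹ := by
  have := nullSingletonClass_gaussianReal (μ := m) hv
  rw [integral_signFlip, gaussianReal_real_Ioo m hv hε,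
    gaussianReal_real_Ioo m hv (by linarith), signFlipProfile]
  have h₁ : (0 - m) / √v = -(m * (√v)⁻¹) := by ring
  have h₂ : (-ε - m) / √v = -((ε + m) * (√v)⁻¹) := by ring
  rw [h₁, h₂, stdNormalArea_neg, stdNormalArea_neg, div_eq_mul_inv]
  ring

lemma hasDerivAt_signFlipProfile (ε m t : ℝ) :
    HasDerivAt (signFlipProfile ε m)
      ((ε - m) * gaussianPDFReal 0 1 ((ε - m) * t) + 2 * (m * gaussianPDFReal 0 1 (m * t))
        - (ε + m) * gaussianPDFReal 0 1 ((ε + m) * t)) t := by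
  have h (c : ℝ) :
      HasDerivAt (fun t => stdNormalArea (c * t)) (c * gaussianPDFReal 0 1 (c * t)) t := by
    simpa [Function.comp_def, mul_comm] using
      (hasDerivAt_stdNormalArea (c * t)).comp t ((hasDerivAt_id' t).const_mul c)
  exact ((h (ε - m)).add ((h m).const_mul 2)).sub (h (ε + m))

lemma signFlipProfile_strictMonoOn {ε m : ℝ} (hm : 0 < m) (hmε : m < ε) :
    StrictMonoOn (signFlipProfile ε m) (Ici 0) := by
  have hφ := gaussianPDFReal_strictAntiOn_Ici 0 one_ne_zero
  refine strictMonoOn_of_deriv_pos (convex_Ici 0)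
    (fun t _ => (hasDerivAt_signFlipProfile ε m t).continuousAt.continuousWithinAt)
    fun t ht => ?_
  rw [interior_Ici, mem_Ioi] at ht
  rw [(hasDerivAt_signFlipProfile ε m t).deriv]
  have h₁ : gaussianPDFReal 0 1 ((ε + m) * t) ≤ gaussianPDFReal 0 1 ((ε - m) * t) :=
    hφ.antitoneOn (mem_Ici.mpr (by nlinarith)) (mem_Ici.mpr (by nlinarith)) (by nlinarith)
  have h₂ : gaussianPDFReal 0 1 ((ε + m) * t) < gaussianPDFReal 0 1 (m * t) :=
    hφ (mem_Ici.mpr (by positivity)) (mem_Ici.mpr (by nlinarith)) (by nlinarith)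
  nlinarith

lemma integral_pi_sum_comp_eval {ι : Type*} [Fintype ι] {X : ι → Type*}
    [∀ i, MeasurableSpace (X i)] {ν : ∀ i, Measure (X i)} [∀ i, IsProbabilityMeasure (ν i)]
    {E : Type*} [NormedAddCommGroup E] [NormedSpace ℝ E] {f : ∀ i, X i → E}
    (hf : ∀ i, Integrable (f i) (ν i)) :
    ∫ u, ∑ i, f i (u i) ∂Measure.pi ν = ∑ i, ∫ x, f i x ∂ν i := by
  rw [integral_finsetSum _ fun i _ => integrable_comp_eval (hf i)]
  exact Finset.sum_congr rfl fun i _ => integral_comp_eval (hf i).aestronglyMeasurable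

lemma gaussGap_eq_sum_signFlipProfile (d : ℕ) (W : ℝ) {ε : ℝ} (hε : 0 ≤ ε) (μ : Fin d → ℝ)
    {σ : Fin d → ℝ} (hσ : ∀ j, 0 < σ j) {n : ℕ} (hn : n ≠ 0) :
    gaussGap d W ε μ σ n = 2 * W * ∑ j, μ j * signFlipProfile ε (μ j) (√n / σ j) := by
  have hint (m c : ℝ) (v : ℝ≥0) : Integrable (fun x => signFlip ε x * c) (gaussianReal m v) :=
    Integrable.of_bound ((measurable_signFlip ε).mul_const c).aestronglyMeasurable (2 * |c|)
      (ae_of_all _ fun x => by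
        rw [norm_mul, norm_eq_abs, norm_eq_abs]
        exact mul_le_mul_of_nonneg_right (abs_signFlip_le ε x) (abs_nonneg c))
  simp only [gaussGap, ← signFlip.eq_1]
  rw [integral_pi_sum_comp_eval fun j => hint _ _ _, Finset.mul_sum, Finset.mul_sum]
  refine Finset.sum_congr rfl fun j _ => ?_
  have hv : 0 < (σ j) ^ 2 / n := by have := hσ j; positivity
  rw [integral_mul_const, integral_signFlip_gaussianReal hε _ (toNNReal_pos.mpr hv).ne',
    coe_toNNReal _ hv.le, sqrt_div' _ (Nat.cast_nonneg n), sqrt_sq (hσ j).le, inv_div]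
  ring

/-- In the strong adversary regime `ε > ‖μ‖_∞` (i.e. `ε > μ(j)` for every `j`, as `μ ≥ 0`),
the generalization gap is strictly increasing for all `n ≥ 1`. -/
theorem gaussGap_strong_adversary (d : ℕ) (W ε : ℝ) (μ σ : Fin d → ℝ)
    (hW : 0 < W) (hε : 0 < ε) (hμ : ∀ j, 0 ≤ μ j) (hσ : ∀ j, 0 < σ j)
    (hμne : μ ≠ 0) (hstrong : ∀ j, μ j < ε) :
    ∀ m n : ℕ, 1 ≤ m → m < n →
      gaussGap d W ε μ σ m < gaussGap d W ε μ σ n := by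
  intro m n hm hmn
  have hprec_nonneg (k : ℕ) (j : Fin d) : √k / σ j ∈ Ici 0 :=
    div_nonneg (sqrt_nonneg _) (hσ j).le
  have hprec_lt (j : Fin d) : √m / σ j < √n / σ j :=
    div_lt_div_of_pos_right (sqrt_lt_sqrt m.cast_nonneg (by exact_mod_cast hmn)) (hσ j)
  have hmono (j : Fin d) (hj : 0 < μ j) :
      signFlipProfile ε (μ j) (√m / σ j) < signFlipProfile ε (μ j) (√n / σ j) :=
    signFlipProfile_strictMonoOn hj (hstrong j) (hprec_nonneg m j) (hprec_nonneg n j) (hprec_lt j)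
  rw [gaussGap_eq_sum_signFlipProfile d W hε.le μ hσ (by omega),
    gaussGap_eq_sum_signFlipProfile d W hε.le μ hσ (by omega)]
  refine mul_lt_mul_of_pos_left (Finset.sum_lt_sum (fun j _ => ?_) ?_) (by positivity)
  · rcases (hμ j).eq_or_lt with hj | hj
    · simp [← hj]
    · exact mul_le_mul_of_nonneg_left (hmono j hj).le hj.le
  · obtain ⟨j, hj⟩ := Function.ne_iff.mp hμne
    have hj : 0 < μ j := (hμ j).lt_of_ne' hj
    exact ⟨j, Finset.mem_univ j, mul_lt_mul_of_pos_left (hmono j hj) hj⟩
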